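/- arXiv:1807.04428 — 2 statements merged into one kernel-verified Lean document; each statement's English description precedes it below -/
import Mathlib

section
/- (Expected ascent of BCM under importance sampling, one step.) Assume A ≠ 0 and let σ ∈ M_r be such that Σ_{j=1}^n ‖g_j(σ)‖ > 0. With sampling probabilities p_i = ‖g_i(σ)‖ / Σ_{j=1}^n ‖g_j(σ)‖, one has Σ_{i=1}^n p_i f(T_i(σ)) − f(σ) ≥ ‖grad f(σ)‖_F² / (2 ‖A‖_{1,1}), where ‖A‖_{1,1} = Σ_{i,j=1}^n |A_{ij}|. -/
open scoped BigOperators RealInnerProductSpace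
open Finset Matrix

noncomputable section

/-- Points on the sphere live in Euclidean space `ℝ^r`. -/
abbrev Pt (r : ℕ) := EuclideanSpace ℝ (Fin r)

/-- A configuration: `n` rows, each a vector in `ℝ^r`. -/
abbrev Conf (n r : ℕ) := Fin n → Pt r

/-- Membership in the manifold `M_r`: all rows are unit vectors. -/
def inM {n r : ℕ} (σ : Conf n r) : Prop := ∀ i, ‖σ i‖ = 1

/-- `g_i(σ) = ∑_{j ≠ i} A_{ij} σ_j`. -/
def gvec {n r : ℕ} (A : Matrix (Fin n) (Fin n) ℝ) (σ : Conf n r) (i : Fin n) : Pt r :=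
  ∑ j ∈ univ.erase i, A i j • σ j

/-- The objective `f(σ) = ⟨A, σσᵀ⟩ = ∑_{i,j} A_{ij} ⟨σ_i, σ_j⟩`. -/
def fval {n r : ℕ} (A : Matrix (Fin n) (Fin n) ℝ) (σ : Conf n r) : ℝ :=
  ∑ i, ∑ j, A i j * ⟪σ i, σ j⟫

/-- The BCM update `T_i(σ)`: replace row `i` by `g_i(σ)/‖g_i(σ)‖`
    (unchanged if `g_i(σ) = 0`). -/
def Tupd {n r : ℕ} (A : Matrix (Fin n) (Fin n) ℝ) (σ : Conf n r) (i : Fin n) : Conf n r :=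
  letI := Classical.dec (gvec A σ i = 0)
  Function.update σ i (if gvec A σ i = 0 then σ i else ‖gvec A σ i‖⁻¹ • gvec A σ i)

/-- `‖A‖₁ = max_j ∑_i |A_{ij}|`. -/
def Anorm1 {n : ℕ} (A : Matrix (Fin n) (Fin n) ℝ) : ℝ := ⨆ j, ∑ i, |A i j|

/-- `‖A‖_{1,1} = ∑_{i,j} |A_{ij}|`. -/
def Anorm11 {n : ℕ} (A : Matrix (Fin n) (Fin n) ℝ) : ℝ := ∑ i, ∑ j, |A i j|

/-- Squared Riemannian gradient norm
    `‖grad f(σ)‖_F² = 2 ∑_i (‖g_i‖² − ⟨σ_i, g_i⟩²)`. -/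
def gradNormSq {n r : ℕ} (A : Matrix (Fin n) (Fin n) ℝ) (σ : Conf n r) : ℝ :=
  2 * ∑ i, (‖gvec A σ i‖ ^ 2 - ⟪σ i, gvec A σ i⟫ ^ 2)

/-- The geodesic through `σ` in direction `u`, at time `t`:
    `σ_i(t) = σ_i cos(‖u_i‖ t) + (u_i/‖u_i‖) sin(‖u_i‖ t)` (rows with `u_i = 0` stay fixed). -/
def geo {n r : ℕ} (σ u : Conf n r) (t : ℝ) : Conf n r :=
  fun i => Real.cos (‖u i‖ * t) • σ i + (Real.sin (‖u i‖ * t) / ‖u i‖) • u i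

/-- Tangency: `u ∈ T_σ M_r` iff every row of `u` is orthogonal to the
    corresponding row of `σ`. -/
def tangent {n r : ℕ} (σ u : Conf n r) : Prop := ∀ i, ⟪u i, σ i⟫ = 0

/-- Squared Frobenius norm `‖u‖_F² = ∑_i ‖u_i‖²`. -/
def fnormSq {n r : ℕ} (u : Conf n r) : ℝ := ∑ i, ‖u i‖ ^ 2

/-- Riemannian gradient pairing `G_σ(u) = 2 ∑_i ⟨u_i, g_i(σ)⟩`. -/
def Gform {n r : ℕ} (A : Matrix (Fin n) (Fin n) ℝ) (σ u : Conf n r) : ℝ :=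
  2 * ∑ i, ⟪u i, gvec A σ i⟫

/-- Riemannian Hessian quadratic form
    `H_σ(u) = 2 ∑_i (⟨u_i, v_i⟩ − ‖u_i‖² ⟨σ_i, g_i(σ)⟩)` with `v_i = ∑_{j≠i} A_{ij} u_j`. -/
def Hform {n r : ℕ} (A : Matrix (Fin n) (Fin n) ℝ) (σ u : Conf n r) : ℝ :=
  2 * ∑ i, (⟪u i, gvec A u i⟫ - ‖u i‖ ^ 2 * ⟪σ i, gvec A σ i⟫)

/-- Stationary point: `g_i(σ) ≠ 0` and `σ_i = g_i(σ)/‖g_i(σ)‖` for all `i`. -/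
def stationary {n r : ℕ} (A : Matrix (Fin n) (Fin n) ℝ) (σ : Conf n r) : Prop :=
  ∀ i, gvec A σ i ≠ 0 ∧ σ i = ‖gvec A σ i‖⁻¹ • gvec A σ i

/-- `w ∈ V_σ = {σB : Bᵀ = −B}` (rows of `σB` given by `(σB)_{ik} = ∑_l σ_{il} B_{lk}`). -/
def inV {n r : ℕ} (σ w : Conf n r) : Prop :=
  ∃ B : Matrix (Fin r) (Fin r) ℝ, Bᵀ = -B ∧ ∀ i k, w i k = ∑ l, σ i l * B l k

/-- Frobenius-orthogonality of `u` to the subspace `V_σ`. -/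
def perpV {n r : ℕ} (σ u : Conf n r) : Prop :=
  ∀ w : Conf n r, inV σ w → ∑ i, ⟪u i, w i⟫ = 0

/-- `f` satisfies quadratic decay at `σ` with constant `μ`:
    `H_σ(u) ≤ −μ ‖u‖_F²` for all tangent `u` Frobenius-orthogonal to `V_σ`. -/
def quadDecay {n r : ℕ} (A : Matrix (Fin n) (Fin n) ℝ) (σ : Conf n r) (μ : ℝ) : Prop :=
  ∀ u : Conf n r, tangent σ u → perpV σ u → Hform A σ u ≤ -μ * fnormSq u

/-- Geodesic distance `dist(σ, σ') = (∑_i arccos⟨σ_i, σ'_i⟩²)^{1/2}`. -/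
def gdist {n r : ℕ} (σ σ' : Conf n r) : ℝ :=
  Real.sqrt (∑ i, Real.arccos ⟪σ i, σ' i⟫ ^ 2)

/-- Right-multiplication of a configuration by a matrix `Q ∈ ℝ^{r×r}` (rowwise). -/
def rowMulQ {n r : ℕ} (σ : Conf n r) (Q : Matrix (Fin r) (Fin r) ℝ) : Conf n r :=
  fun i => (EuclideanSpace.equiv (Fin r) ℝ).symm (fun k => ∑ l, σ i l * Q l k)

/-- Distance to the equivalence class `[σ'] = {σ'Q : Q ∈ O(r)}`. -/
def distClass {n r : ℕ} (σ σ' : Conf n r) : ℝ :=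
  ⨅ Q : {Q : Matrix (Fin r) (Fin r) ℝ // Qᵀ * Q = 1}, gdist σ (rowMulQ σ' Q.1)

/-- `f* = sup_{σ ∈ M_r} f(σ)`. -/
def fstar {n r : ℕ} (A : Matrix (Fin n) (Fin n) ℝ) : ℝ :=
  sSup (fval A '' {σ : Conf n r | inM σ})

/-- The optimal value of the SDP with unit-diagonal constraints. -/
def SDPval {n : ℕ} (A : Matrix (Fin n) (Fin n) ℝ) : ℝ :=
  sSup {y | ∃ X : Matrix (Fin n) (Fin n) ℝ, X.PosSemidef ∧ (∀ i, X i i = 1) ∧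
    y = ∑ i, ∑ j, A i j * X i j}

/-- BCM iterates along a sequence of coordinates `ω`. -/
def iterSeq {n r : ℕ} (A : Matrix (Fin n) (Fin n) ℝ) (σ0 : Conf n r) (ω : ℕ → Fin n) :
    ℕ → Conf n r
  | 0 => σ0
  | k + 1 => Tupd A (iterSeq A σ0 ω k) (ω k)

/-- The set of rows where `u` is nonzero. -/
def suppu {n r : ℕ} (u : Conf n r) : Finset (Fin n) :=
  letI := Classical.decPred (fun i : Fin n => u i ≠ 0)
  Finset.univ.filter (fun i : Fin n => u i ≠ 0)

/-! Because `A` is symmetric with zero diagonal, replacing row `i` of `σ` by `x` changes `f` by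
`2⟪x - σᵢ, gᵢ⟫`, so the BCM step at row `i` gains exactly `2 (‖gᵢ‖ - ⟪σᵢ, gᵢ⟫)`. Averaged with the
weights `‖gᵢ‖ / S`, `S = ∑ ‖gⱼ‖`, the gain is `(2 / S) ∑ ‖gᵢ‖ (‖gᵢ‖ - ⟪σᵢ, gᵢ⟫)`. Each term of the
gradient norm satisfies `‖gᵢ‖² - ⟪σᵢ, gᵢ⟫² ≤ 2 ‖gᵢ‖ (‖gᵢ‖ - ⟪σᵢ, gᵢ⟫)`, a rearrangement of
`(‖gᵢ‖ - ⟪σᵢ, gᵢ⟫)² ≥ 0`, and `S ≤ ‖A‖_{1,1}` since the rows of `σ` are unit vectors. -/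

section

variable {n r : ℕ} (A : Matrix (Fin n) (Fin n) ℝ)

lemma gvec_eq_sum (hdiag : ∀ i, A i i = 0) (σ : Conf n r) (i : Fin n) :
    gvec A σ i = ∑ j, A i j • σ j :=
  sum_erase _ (by rw [hdiag, zero_smul])

lemma inner_gvec (hdiag : ∀ i, A i i = 0) (σ : Conf n r) (i : Fin n) (x : Pt r) :
    ⟪x, gvec A σ i⟫ = ∑ j, A i j * ⟪x, σ j⟫ := by
  simp only [gvec_eq_sum A hdiag, inner_sum, real_inner_smul_right]

lemma fval_eq_sum_inner_gvec (hdiag : ∀ i, A i i = 0) (σ : Conf n r) :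
    fval A σ = ∑ i, ⟪σ i, gvec A σ i⟫ := by
  simp only [fval, inner_gvec A hdiag]

lemma fval_add (hA : A.IsSymm) (hdiag : ∀ i, A i i = 0) (σ τ : Conf n r) :
    fval A (σ + τ) = fval A σ + 2 * ∑ i, ⟪τ i, gvec A σ i⟫ + fval A τ := by
  have hcross : ∑ i, ∑ j, A i j * ⟪σ i, τ j⟫ = ∑ i, ∑ j, A i j * ⟪τ i, σ j⟫ := by
    rw [sum_comm]
    simp only [hA.apply, real_inner_comm]
  simp only [fval, inner_gvec A hdiag, Pi.add_apply, inner_add_left, inner_add_right, mul_add,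
    sum_add_distrib, hcross]
  ring

lemma fval_update (hA : A.IsSymm) (hdiag : ∀ i, A i i = 0) (σ : Conf n r) (i : Fin n)
    (x : Pt r) : fval A (Function.update σ i x) = fval A σ + 2 * ⟪x - σ i, gvec A σ i⟫ := by
  classical
  set τ : Conf n r := Pi.single i (x - σ i)
  have hupd : Function.update σ i x = σ + τ := by
    ext1 j
    by_cases hj : j = i
    · subst hj; simp [τ]
    · simp [τ, hj]
  have hpair : ∀ v : Conf n r, ∑ j, ⟪τ j, v j⟫ = ⟪x - σ i, v i⟫ := fun v =>
    (Fintype.sum_eq_single i fun j hj => by simp [τ, hj]).trans (by simp [τ])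
  have hτ : fval A τ = 0 := by
    have hg : gvec A τ i = 0 := sum_eq_zero fun j hj => by simp [τ, (mem_erase.mp hj).1]
    rw [fval_eq_sum_inner_gvec A hdiag, hpair, hg, inner_zero_right]
  rw [hupd, fval_add A hA hdiag, hpair, hτ, add_zero]

lemma fval_Tupd (hA : A.IsSymm) (hdiag : ∀ i, A i i = 0) (σ : Conf n r) (i : Fin n) :
    fval A (Tupd A σ i) = fval A σ + 2 * (‖gvec A σ i‖ - ⟪σ i, gvec A σ i⟫) := by
  by_cases hg : gvec A σ i = 0
  · simp [Tupd, hg]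
  · have hnorm : ‖gvec A σ i‖ ≠ 0 := norm_ne_zero_iff.mpr hg
    rw [Tupd, if_neg hg, fval_update A hA hdiag, inner_sub_left, real_inner_smul_left,
      real_inner_self_eq_norm_sq]
    field_simp

lemma sum_mul_fval_Tupd_sub (hA : A.IsSymm) (hdiag : ∀ i, A i i = 0) (σ : Conf n r)
    (p : Fin n → ℝ) (hp : ∑ i, p i = 1) :
    ∑ i, p i * fval A (Tupd A σ i) - fval A σ =
      2 * ∑ i, p i * (‖gvec A σ i‖ - ⟪σ i, gvec A σ i⟫) := by
  simp only [fval_Tupd A hA hdiag, mul_add, sum_add_distrib, ← sum_mul, hp, one_mul,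
    add_sub_cancel_left, mul_sum]
  exact sum_congr rfl fun i _ => mul_left_comm _ _ _

lemma norm_gvec_le (σ : Conf n r) (hσ : inM σ) (i : Fin n) : ‖gvec A σ i‖ ≤ ∑ j, |A i j| :=
  calc ‖gvec A σ i‖ ≤ ∑ j ∈ univ.erase i, ‖A i j • σ j‖ := norm_sum_le _ _
    _ = ∑ j ∈ univ.erase i, |A i j| := by simp only [norm_smul, hσ _, mul_one, Real.norm_eq_abs]
    _ ≤ ∑ j, |A i j| := sum_le_sum_of_subset_of_nonneg (erase_subset _ _) fun j _ _ => abs_nonneg _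

lemma sum_norm_gvec_le_Anorm11 (σ : Conf n r) (hσ : inM σ) : ∑ i, ‖gvec A σ i‖ ≤ Anorm11 A :=
  sum_le_sum fun i _ => norm_gvec_le A σ hσ i

lemma gradNormSq_le (σ : Conf n r) :
    gradNormSq A σ ≤ 4 * ∑ i, ‖gvec A σ i‖ * (‖gvec A σ i‖ - ⟪σ i, gvec A σ i⟫) := by
  rw [gradNormSq, mul_sum, mul_sum]
  exact sum_le_sum fun i _ => by nlinarith [sq_nonneg (‖gvec A σ i‖ - ⟪σ i, gvec A σ i⟫)]

end

theorem importance_bcm_expected_ascent_general {n r : ℕ}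
    (A : Matrix (Fin n) (Fin n) ℝ) (hA : A.IsSymm) (hdiag : ∀ i, A i i = 0)
    (σ : Conf n r) (hσ : inM σ) (hpos : 0 < ∑ j, ‖gvec A σ j‖) :
    gradNormSq A σ / (2 * Anorm11 A) ≤
      (∑ i, (‖gvec A σ i‖ / ∑ j, ‖gvec A σ j‖) * fval A (Tupd A σ i)) - fval A σ := by
  set S := ∑ j, ‖gvec A σ j‖
  set W := ∑ i, ‖gvec A σ i‖ * (‖gvec A σ i‖ - ⟪σ i, gvec A σ i⟫)
  have hprob : ∑ i, ‖gvec A σ i‖ / S = 1 := by rw [← sum_div, div_self hpos.ne']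
  have hW : 0 ≤ W := sum_nonneg fun i _ => mul_nonneg (norm_nonneg _) <| sub_nonneg.mpr <|
    (real_inner_le_norm _ _).trans_eq (by rw [hσ i, one_mul])
  have hSN : S ≤ Anorm11 A := sum_norm_gvec_le_Anorm11 A σ hσ
  rw [sum_mul_fval_Tupd_sub A hA hdiag σ _ hprob]
  calc gradNormSq A σ / (2 * Anorm11 A)
      ≤ 4 * W / (2 * S) := div_le_div₀ (by positivity) (gradNormSq_le A σ) (by positivity)
          (by linarith)
    _ = 2 * ∑ i, ‖gvec A σ i‖ / S * (‖gvec A σ i‖ - ⟪σ i, gvec A σ i⟫) := by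
      simp only [div_mul_eq_mul_div, ← sum_div, W]
      field_simp
      ring

/-- expected ascent of BCM under importance sampling, one step. -/
theorem importance_bcm_expected_ascent {n r : ℕ} (hn : 0 < n) (hr : 0 < r)
    (A : Matrix (Fin n) (Fin n) ℝ) (hA : A.IsSymm) (hdiag : ∀ i, A i i = 0) (hA0 : A ≠ 0)
    (σ : Conf n r) (hσ : inM σ) (hpos : 0 < ∑ j, ‖gvec A σ j‖) :
    gradNormSq A σ / (2 * Anorm11 A) ≤
      (∑ i, (‖gvec A σ i‖ / ∑ j, ‖gvec A σ j‖) * fval A (Tupd A σ i)) - fval A σ :=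
  importance_bcm_expected_ascent_general A hA hdiag σ hσ hpos
end
end

section
/- (Strict complementarity and dual nondegeneracy imply quadratic decay.) Let σ ∈ M_r and let Λ be an n×n real diagonal matrix such that Λ − A is positive semidefinite and (Λ − A)σ = 0 (so σσᵀ is a primal optimal and Λ encodes a dual optimal solution of the SDP with unit-diagonal constraints). Let r* = rank(σ). Assume strict complementarity: the kernel of Λ − A equals the column space of σ. Assume dual nondegeneracy: there exists Q₁ ∈ ℝ^{n×r*} with orthonormal columns whose column space equals the column space of σ such that, writing q_1,…,q_n ∈ ℝ^{r*} for the rows of Q₁, the matrices q_1 q_1ᵀ, …, q_n q_nᵀ span the space of r*×r* real symmetric matrices. Then there exists μ > 0 such that 2⟨u, (A − Λ)u⟩_F ≤ −μ ‖u‖_F² for every u ∈ T_σ M_r that is Frobenius-orthogonal to V_σ; that is, f satisfies quadratic decay at σ with constant μ. -/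
/-!
Write `Λ - A = BᵀB`, so that `-⟨u, (A - Λ)u⟩_F = ‖Bu‖_F²`. An injective linear map on a
finite-dimensional space is bounded below, so it suffices that `Bu = 0` forces `u = 0` on the
horizontal space. If `Bu = 0` then `(Λ - A)u = 0`, so by strict complementarity the columns of `u`
lie in the column space of `σ`, which is that of `Q₁`. Writing `u = Q₁M` and `σ = Q₁R`, tangency
says that the diagonal of `uσᵀ + σuᵀ = Q₁WQ₁ᵀ` vanishes, i.e. the symmetric matrix `W` is
orthogonal to every `q_i q_iᵀ`; by dual nondegeneracy `W = 0`, so `uσᵀ` is skew. Orthogonality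
to `V_σ` makes `σᵀu` symmetric, and then `‖σᵀu‖² = -‖σuᵀ‖²` forces `σᵀu = 0`. Finally `u = σC`,
so `‖u‖² = tr(Cᵀσᵀu) = 0`.
-/

open Finset Matrix

attribute [local instance] Matrix.frobeniusNormedAddCommGroup Matrix.frobeniusNormedSpace

theorem LinearMap.exists_pos_mul_norm_le_of_disjoint_ker {𝕜 E F : Type*}
    [NontriviallyNormedField 𝕜] [CompleteSpace 𝕜]
    [NormedAddCommGroup E] [NormedSpace 𝕜 E] [FiniteDimensional 𝕜 E]
    [NormedAddCommGroup F] [NormedSpace 𝕜 F] {U : Submodule 𝕜 E} {f : E →ₗ[𝕜] F}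
    (h : Disjoint U (LinearMap.ker f)) : ∃ c > 0, ∀ x ∈ U, c * ‖x‖ ≤ ‖f x‖ := by
  have hker : LinearMap.ker (f.comp U.subtype) = ⊥ := by
    rwa [LinearMap.ker_comp, ← Submodule.disjoint_iff_comap_eq_bot]
  obtain ⟨c, hc, hle⟩ := antilipschitzWith_iff_exists_mul_le_norm.mp <|
    ((f.comp U.subtype).exists_antilipschitzWith hker).imp fun _ => And.right
  exact ⟨c, hc, fun x hx => hle ⟨x, hx⟩⟩

namespace Matrix

section CommSemiring

variable {R m k p : Type*} [CommSemiring R] [Fintype k] [Fintype p]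

theorem exists_eq_mul_of_range_mulVecLin_le [DecidableEq k] {X : Matrix m k R}
    {Y : Matrix m p R} (h : LinearMap.range X.mulVecLin ≤ LinearMap.range Y.mulVecLin) :
    ∃ M : Matrix p k R, X = Y * M := by
  have hcol : ∀ j, ∃ v, Y *ᵥ v = X.col j := fun j => by
    rw [← mulVec_single_one]
    exact h ⟨Pi.single j 1, rfl⟩
  choose v hv using hcol
  refine ⟨(of v)ᵀ, ?_⟩
  ext i j
  rw [← col_apply X j i, ← hv]
  rfl

theorem range_mulVecLin_le_ker_of_mul_eq_zero [Fintype m] {S : Matrix m m R}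
    {X : Matrix m k R} (h : S * X = 0) :
    LinearMap.range X.mulVecLin ≤ LinearMap.ker S.mulVecLin := by
  rintro _ ⟨v, rfl⟩
  simp [mulVec_mulVec, h]

end CommSemiring

theorem trace_mul_vecMulVec_self {R m p : Type*} [CommRing R] [Fintype p]
    (Q : Matrix m p R) (W : Matrix p p R) (i : m) :
    trace (W * vecMulVec (Q i) (Q i)) = (Q * W * Qᵀ) i i := by
  simp only [trace, diag, mul_apply, vecMulVec_apply, transpose_apply, Finset.sum_mul]
  rw [Finset.sum_comm]
  exact Finset.sum_congr rfl fun a _ => Finset.sum_congr rfl fun b _ => by ring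

variable {m k p : Type*} [Fintype m] [Fintype k] [Fintype p]

theorem frobenius_norm_sq_eq_sum (X : Matrix m k ℝ) : ‖X‖ ^ 2 = ∑ i, ∑ j, X i j ^ 2 := by
  rw [frobenius_norm_def, ← Real.sqrt_eq_rpow, Real.sq_sqrt (by positivity)]
  simp only [Real.rpow_two, Real.norm_eq_abs, sq_abs]

theorem frobenius_norm_sq_eq_trace (X : Matrix m k ℝ) : ‖X‖ ^ 2 = trace (Xᵀ * X) := by
  rw [frobenius_norm_sq_eq_sum, Finset.sum_comm]
  simp [trace, mul_apply, sq]

theorem PosSemidef.exists_eq_transpose_mul_self {S : Matrix m m ℝ} (hS : S.PosSemidef) :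
    ∃ B : Matrix m m ℝ, S = Bᵀ * B := by
  classical
  open scoped MatrixOrder in
  obtain ⟨B, hB⟩ := CStarAlgebra.nonneg_iff_eq_star_mul_self.mp hS.nonneg
  exact ⟨B, by simpa [star_eq_conjTranspose] using hB⟩

theorem eq_zero_of_diag_mul_mul_transpose_eq_zero {ι : Type*} {Q : Matrix ι p ℝ}
    (hspan : ∀ X : Matrix p p ℝ, X.IsSymm →
      X ∈ Submodule.span ℝ (Set.range fun i => vecMulVec (Q i) (Q i)))
    {W : Matrix p p ℝ} (hW : W.IsSymm) (hdiag : ∀ i, (Q * W * Qᵀ) i i = 0) : W = 0 := by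
  have hle : Submodule.span ℝ (Set.range fun i => vecMulVec (Q i) (Q i)) ≤
      LinearMap.ker ((traceLinearMap p ℝ ℝ).comp (LinearMap.mulLeft ℝ W)) := by
    rw [Submodule.span_le]
    rintro _ ⟨i, rfl⟩
    simpa [trace_mul_vecMulVec_self] using hdiag i
  have hWW : trace (Wᵀ * W) = 0 := by
    simpa [hW.eq] using hle (hspan W hW)
  rwa [← frobenius_norm_sq_eq_trace, sq_eq_zero_iff, norm_eq_zero] at hWW

theorem isSymm_of_trace_transpose_mul_skew_eq_zero {X : Matrix k k ℝ}
    (h : ∀ B : Matrix k k ℝ, Bᵀ = -B → trace (Xᵀ * B) = 0) : X.IsSymm := by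
  set B := X - Xᵀ
  have hB : Bᵀ = -B := by simp [B]
  have hXtB : trace (Xᵀ * B) = 0 := h B hB
  have hXB : trace (X * B) = 0 := by
    rw [← trace_transpose, transpose_mul, hB, neg_mul, trace_neg, trace_mul_comm, hXtB, neg_zero]
  have hBB : trace (Bᵀ * B) = 0 := by
    rw [hB, neg_mul, trace_neg, sub_mul, trace_sub, hXB, hXtB, sub_zero, neg_zero]
  rw [← frobenius_norm_sq_eq_trace, sq_eq_zero_iff, norm_eq_zero, sub_eq_zero] at hBB
  exact hBB.symm

theorem transpose_mul_eq_zero_of_add_eq_zero_of_isSymm {u σ : Matrix m k ℝ}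
    (hskew : u * σᵀ + σ * uᵀ = 0) (hsym : (σᵀ * u).IsSymm) : σᵀ * u = 0 := by
  have huσ : u * σᵀ = -(σ * uᵀ) := eq_neg_of_add_eq_zero_left hskew
  have h : ‖σᵀ * u‖ ^ 2 = -‖σ * uᵀ‖ ^ 2 := by
    rw [frobenius_norm_sq_eq_trace, frobenius_norm_sq_eq_trace, hsym.eq]
    calc trace (σᵀ * u * (σᵀ * u)) = trace (σᵀ * (u * σᵀ) * u) := by
          simp only [Matrix.mul_assoc]
      _ = -trace ((σᵀ * σ * uᵀ) * u) := by
          rw [huσ, Matrix.mul_neg, Matrix.neg_mul, trace_neg]; simp only [Matrix.mul_assoc]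
      _ = -trace ((σ * uᵀ)ᵀ * (σ * uᵀ)) := by
          rw [trace_mul_comm]; simp only [transpose_mul, transpose_transpose, Matrix.mul_assoc]
  have hK : ‖σᵀ * u‖ ^ 2 = 0 := by nlinarith [sq_nonneg ‖σᵀ * u‖, sq_nonneg ‖σ * uᵀ‖]
  rwa [sq_eq_zero_iff, norm_eq_zero] at hK

theorem mul_transpose_add_mul_transpose_eq_zero {ι : Type*} {Q : Matrix ι p ℝ}
    (hspan : ∀ X : Matrix p p ℝ, X.IsSymm →
      X ∈ Submodule.span ℝ (Set.range fun i => vecMulVec (Q i) (Q i)))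
    {u σ : Matrix ι k ℝ} (hu : LinearMap.range u.mulVecLin ≤ LinearMap.range Q.mulVecLin)
    (hσ : LinearMap.range σ.mulVecLin ≤ LinearMap.range Q.mulVecLin)
    (htan : ∀ i, ∑ j, u i j * σ i j = 0) : u * σᵀ + σ * uᵀ = 0 := by
  classical
  obtain ⟨M, rfl⟩ := exists_eq_mul_of_range_mulVecLin_le hu
  obtain ⟨R, rfl⟩ := exists_eq_mul_of_range_mulVecLin_le hσ
  have hW : (M * Rᵀ + R * Mᵀ).IsSymm := by
    simp only [IsSymm, transpose_add, transpose_mul, transpose_transpose, add_comm]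
  have hQW : Q * M * (Q * R)ᵀ + Q * R * (Q * M)ᵀ = Q * (M * Rᵀ + R * Mᵀ) * Qᵀ := by
    simp only [transpose_mul, Matrix.mul_add, Matrix.add_mul, Matrix.mul_assoc]
  rw [hQW, eq_zero_of_diag_mul_mul_transpose_eq_zero hspan hW fun i => ?_, Matrix.mul_zero,
    Matrix.zero_mul]
  have hdiag : ∀ X Y : Matrix ι k ℝ, (X * Yᵀ) i i = ∑ j, X i j * Y i j := fun _ _ => rfl
  rw [← hQW, add_apply, hdiag, hdiag, htan i, zero_add]
  simpa only [mul_comm] using htan i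

-- `V_σ = {σB : Bᵀ = -B}` is the vertical space of the quotient of `M_r` by `O(r)`; this is its
-- Frobenius-orthogonal complement in the tangent space `T_σ M_r`.
def horizontalSpace (σ : Matrix m k ℝ) : Submodule ℝ (Matrix m k ℝ) where
  carrier := {u | (∀ i, ∑ j, u i j * σ i j = 0) ∧
    ∀ B : Matrix k k ℝ, Bᵀ = -B → trace (uᵀ * (σ * B)) = 0}
  add_mem' := by
    rintro u v ⟨hu, hu'⟩ ⟨hv, hv'⟩
    refine ⟨fun i => ?_, fun B hB => ?_⟩
    · simp only [add_apply, add_mul, sum_add_distrib, hu i, hv i, add_zero]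
    · rw [transpose_add, Matrix.add_mul, trace_add, hu' B hB, hv' B hB, add_zero]
  zero_mem' := by simp
  smul_mem' := by
    rintro c u ⟨hu, hu'⟩
    refine ⟨fun i => ?_, fun B hB => ?_⟩
    · simp only [smul_apply, smul_eq_mul, mul_assoc, ← mul_sum, hu i, mul_zero]
    · rw [transpose_smul, Matrix.smul_mul, trace_smul, hu' B hB, smul_zero]

theorem eq_zero_of_mem_horizontalSpace_of_mul_eq_zero {S : Matrix m m ℝ} {σ : Matrix m k ℝ}
    {Q : Matrix m p ℝ} (hsc : LinearMap.ker S.mulVecLin = LinearMap.range σ.mulVecLin)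
    (hQ : LinearMap.range Q.mulVecLin = LinearMap.range σ.mulVecLin)
    (hspan : ∀ X : Matrix p p ℝ, X.IsSymm →
      X ∈ Submodule.span ℝ (Set.range fun i => vecMulVec (Q i) (Q i)))
    {u : Matrix m k ℝ} (hu : u ∈ horizontalSpace σ) (hSu : S * u = 0) : u = 0 := by
  classical
  obtain ⟨htan, horth⟩ := hu
  have hrange : LinearMap.range u.mulVecLin ≤ LinearMap.range σ.mulVecLin :=
    hsc ▸ range_mulVecLin_le_ker_of_mul_eq_zero hSu
  have hsym : (σᵀ * u).IsSymm := isSymm_of_trace_transpose_mul_skew_eq_zero fun B hB => by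
    simpa [transpose_mul, Matrix.mul_assoc] using horth B hB
  have hskew := mul_transpose_add_mul_transpose_eq_zero hspan (hQ ▸ hrange) hQ.ge htan
  obtain ⟨C, rfl⟩ := exists_eq_mul_of_range_mulVecLin_le hrange
  rw [← norm_eq_zero, ← sq_eq_zero_iff, frobenius_norm_sq_eq_trace, transpose_mul,
    Matrix.mul_assoc, transpose_mul_eq_zero_of_add_eq_zero_of_isSymm hskew hsym,
    Matrix.mul_zero, trace_zero]

end Matrix

theorem strict_complementarity_quad_decay_general {n r : ℕ}
    (A : Matrix (Fin n) (Fin n) ℝ)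
    (σ : Matrix (Fin n) (Fin r) ℝ)
    (Λ : Matrix (Fin n) (Fin n) ℝ)
    (hpsd : (Λ - A).PosSemidef)
    (hsc : LinearMap.ker (Λ - A).mulVecLin = LinearMap.range σ.mulVecLin)
    (Q₁ : Matrix (Fin n) (Fin σ.rank) ℝ)
    (hQcol : LinearMap.range Q₁.mulVecLin = LinearMap.range σ.mulVecLin)
    (hspan : ∀ X : Matrix (Fin σ.rank) (Fin σ.rank) ℝ, X.IsSymm →
      X ∈ Submodule.span ℝ (Set.range fun i : Fin n => vecMulVec (Q₁ i) (Q₁ i))) :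
    ∃ μ : ℝ, 0 < μ ∧ ∀ u : Matrix (Fin n) (Fin r) ℝ,
      (∀ i, ∑ k, u i k * σ i k = 0) →
      (∀ B : Matrix (Fin r) (Fin r) ℝ, Bᵀ = -B → Matrix.trace (uᵀ * (σ * B)) = 0) →
      2 * Matrix.trace (uᵀ * (A - Λ) * u) ≤ -μ * ∑ i, ∑ k, u i k ^ 2 := by
  obtain ⟨B, hB⟩ := hpsd.exists_eq_transpose_mul_self
  have hdisj : Disjoint (horizontalSpace σ) (LinearMap.ker (mulLeftLinearMap (Fin r) ℝ B)) := by
    refine Submodule.disjoint_def.mpr fun u hu hBu => ?_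
    refine eq_zero_of_mem_horizontalSpace_of_mul_eq_zero hsc hQcol hspan hu ?_
    rw [hB, Matrix.mul_assoc, show B * u = 0 from hBu, Matrix.mul_zero]
  obtain ⟨c, hc, hcoercive⟩ := LinearMap.exists_pos_mul_norm_le_of_disjoint_ker hdisj
  refine ⟨2 * c ^ 2, by positivity, fun u htan horth => ?_⟩
  have hform : trace (uᵀ * (A - Λ) * u) = -‖B * u‖ ^ 2 := by
    rw [frobenius_norm_sq_eq_trace, ← neg_sub, hB, transpose_mul, Matrix.mul_neg, Matrix.neg_mul,
      trace_neg]
    simp only [Matrix.mul_assoc]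
  have hcu : c * ‖u‖ ≤ ‖B * u‖ := hcoercive u ⟨htan, horth⟩
  rw [hform, ← frobenius_norm_sq_eq_sum]
  nlinarith [mul_nonneg hc.le (norm_nonneg u)]

/-- strict complementarity and dual nondegeneracy imply quadratic decay:
there is `μ > 0` with `2⟨u, (A − Λ)u⟩_F ≤ −μ‖u‖_F²` for all tangent `u`
Frobenius-orthogonal to `V_σ`. -/
theorem strict_complementarity_quad_decay {n r : ℕ} (hn : 0 < n) (hr : 0 < r)
    (A : Matrix (Fin n) (Fin n) ℝ) (hA : A.IsSymm) (hdiag : ∀ i, A i i = 0)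
    (σ : Matrix (Fin n) (Fin r) ℝ) (hσ : ∀ i, ∑ k, σ i k ^ 2 = 1)
    (Λ : Matrix (Fin n) (Fin n) ℝ) (hΛ : Λ.IsDiag)
    (hpsd : (Λ - A).PosSemidef) (hzero : (Λ - A) * σ = 0)
    (hsc : LinearMap.ker (Λ - A).mulVecLin = LinearMap.range σ.mulVecLin)
    (Q₁ : Matrix (Fin n) (Fin σ.rank) ℝ) (hQ : Q₁ᵀ * Q₁ = 1)
    (hQcol : LinearMap.range Q₁.mulVecLin = LinearMap.range σ.mulVecLin)
    (hspan : ∀ X : Matrix (Fin σ.rank) (Fin σ.rank) ℝ, X.IsSymm →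
      X ∈ Submodule.span ℝ (Set.range fun i : Fin n => vecMulVec (Q₁ i) (Q₁ i))) :
    ∃ μ : ℝ, 0 < μ ∧ ∀ u : Matrix (Fin n) (Fin r) ℝ,
      (∀ i, ∑ k, u i k * σ i k = 0) →
      (∀ B : Matrix (Fin r) (Fin r) ℝ, Bᵀ = -B → Matrix.trace (uᵀ * (σ * B)) = 0) →
      2 * Matrix.trace (uᵀ * (A - Λ) * u) ≤ -μ * ∑ i, ∑ k, u i k ^ 2 :=
  strict_complementarity_quad_decay_general A σ Λ hpsd hsc Q₁ hQcol hspan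
end
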